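/- arXiv:1703.00271 — 2 statements merged into one kernel-verified Lean document; each statement's English description precedes it below -/
import Mathlib

section
/- In X^{⊗z} with X the 2-dimensional Ū_q(sl_2)-module, for the basis element ρ = ρ_{i_1,...,i_n,z} having ν_1 at positions i_1 < ... < i_n and ν_0 elsewhere, the operator E (acting via the iterated coproduct Δ^{z-1}(E) = Σ_{i=0}^{z-1} 1^{⊗i} ⊗ E ⊗ K^{⊗(z-1-i)}) satisfies E^n ρ = q^{(nz - (n²-n)/2 - Σ_j i_j)} · [n]! · ν_0^{⊗z}. -/
/-- The quantum integer `[k] = (q^k - q^{-k})/(q - q^{-1})`. -/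
noncomputable def qint (q : ℂ) (k : ℤ) : ℂ := (q ^ k - q ^ (-k)) / (q - q⁻¹)

/-- The quantum factorial `[n]! = [1][2]⋯[n]`. -/
noncomputable def qfact (q : ℂ) (n : ℕ) : ℂ := ∏ j ∈ Finset.range n, qint q (j + 1)

/-- The `z`-fold tensor power `X^{⊗z}` of `X = ℂ²`, realized as functions on bit strings:
`v s` is the coefficient of the basis tensor `ν_{s 0} ⊗ ⋯ ⊗ ν_{s (z-1)}`. -/
abbrev V (z : ℕ) := (Fin z → Fin 2) → ℂ

/-- The basis vector of `V z` corresponding to the bit string `t`. -/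
def bvec (z : ℕ) (t : Fin z → Fin 2) : V z := fun s => if s = t then 1 else 0

/-- The action of `E` on `X^{⊗z}` via the iterated coproduct
`Δ^{z-1}(E) = Σᵢ 1^{⊗i} ⊗ E ⊗ K^{⊗(z-1-i)}`, where `E ν₁ = ν₀`, `E ν₀ = 0`,
`K ν_a = q^{1-2a} ν_a`. -/
noncomputable def Eop (q : ℂ) (z : ℕ) (v : V z) : V z := fun s =>
  ∑ i : Fin z, if s i = 0 then
    (∏ j ∈ Finset.univ.filter (fun j => i < j), q ^ ((1 : ℤ) - 2 * ((s j : ℕ) : ℤ))) *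
      v (Function.update s i 1)
  else 0

/-- The action of `F` on `X^{⊗z}` via the iterated coproduct
`Δ^{z-1}(F) = Σᵢ (K⁻¹)^{⊗i} ⊗ F ⊗ 1^{⊗(z-1-i)}`, where `F ν₀ = ν₁`, `F ν₁ = 0`,
`K⁻¹ ν_a = q^{2a-1} ν_a`. -/
noncomputable def Fop (q : ℂ) (z : ℕ) (v : V z) : V z := fun s =>
  ∑ i : Fin z, if s i = 1 then
    (∏ j ∈ Finset.univ.filter (fun j => j < i), q ^ (-((1 : ℤ) - 2 * ((s j : ℕ) : ℤ)))) *
      v (Function.update s i 0)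
  else 0

/-- The action of `K` on `X^{⊗z}` via `Δ^{z-1}(K) = K^{⊗z}`. -/
noncomputable def Kop (q : ℂ) (z : ℕ) (v : V z) : V z := fun s =>
  (∏ j, q ^ ((1 : ℤ) - 2 * ((s j : ℕ) : ℤ))) * v s

open Finset Function

/-!
Removing the `ν₁` at position `i` from a basis tensor, `E` picks up the factor
`q^(#ν₀ after i - #ν₁ after i)` from the `K`'s to its right. So `E^n ρ_S` is a multiple of
`ν₀^{⊗z}`, and by induction on `n = #S` its coefficient is a sum over `i ∈ S`. Once the claimed
power of `q` is pulled out, what is left is `∑_{i ∈ S} q^(n - 1 - 2 r_i)` with `r_i` the number of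
elements of `S` after `i`; as `i` runs over `S`, `r_i` runs over `0, …, n - 1`, so this is `[n]`.
-/

lemma Function.update_eq_iff_eq_update {α β : Type*} [DecidableEq α] {s t : α → β} {i : α}
    {a b : β} : s i = a ∧ update s i b = t ↔ t i = b ∧ s = update t i a := by
  simp only [update_eq_iff, eq_update_iff]
  exact ⟨fun ⟨h₁, h₂, h₃⟩ => ⟨h₂.symm, h₁, h₃⟩, fun ⟨h₁, h₂, h₃⟩ => ⟨h₂, h₁.symm, h₃⟩⟩

lemma sum_card_filter_lt {α M : Type*} [LinearOrder α] [AddCommMonoid M] (S : Finset α)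
    (f : ℕ → M) : ∑ i ∈ S, f #{j ∈ S | i < j} = ∑ m ∈ range #S, f m := by
  have hanti : StrictAntiOn (fun i => #{j ∈ S | i < j}) S := by
    intro i _ i' hi' hii'
    have hsub : {j ∈ S | i' < j} ⊆ {j ∈ S | i < j} := fun j hj => by
      simp only [mem_filter] at hj ⊢
      exact ⟨hj.1, hii'.trans hj.2⟩
    exact card_lt_card ((ssubset_iff_of_subset hsub).2 ⟨i', mem_filter.mpr ⟨hi', hii'⟩, by simp⟩)
  have himage : S.image (fun i => #{j ∈ S | i < j}) = range #S := by
    refine eq_of_subset_of_card_le (fun m hm => ?_) ?_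
    · obtain ⟨i, hi, rfl⟩ := mem_image.mp hm
      exact mem_range.mpr (card_lt_card (filter_ssubset.mpr ⟨i, hi, lt_irrefl i⟩))
    · rw [card_image_of_injOn hanti.injOn, card_range]
  rw [← himage, sum_image hanti.injOn]

lemma sub_inv_ne_zero {K : Type*} [Field K] {q : K} (hq0 : q ≠ 0) (hq1 : q ^ 2 ≠ 1) :
    q - q⁻¹ ≠ 0 := by
  rw [sub_ne_zero]
  contrapose! hq1
  rw [sq]
  nth_rw 2 [hq1]
  exact mul_inv_cancel₀ hq0

lemma qint_natCast_eq_sum {q : ℂ} (hq0 : q ≠ 0) (hq1 : q ^ 2 ≠ 1) (k : ℕ) :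
    qint q k = ∑ m ∈ range k, q ^ ((k : ℤ) - 1 - 2 * m) := by
  rw [qint, div_eq_iff (sub_inv_ne_zero hq0 hq1), sum_mul]
  have htel : ∀ m : ℕ, q ^ ((k : ℤ) - 1 - 2 * m) * (q - q⁻¹) =
      q ^ ((k : ℤ) - 2 * m) - q ^ ((k : ℤ) - 2 * (m + 1 : ℕ)) := by
    intro m
    rw [mul_sub, ← zpow_add_one₀ hq0, ← zpow_sub_one₀ hq0]
    congr 2 <;> push_cast <;> ring
  simp_rw [htel]
  rw [sum_range_sub' (fun m : ℕ => q ^ ((k : ℤ) - 2 * m))]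
  congr 2
  ring

lemma qfact_succ (q : ℂ) (n : ℕ) : qfact q (n + 1) = qfact q n * qint q (n + 1 : ℕ) := by
  rw [qfact, prod_range_succ, ← qfact]
  push_cast
  rfl

noncomputable def EopLinear (q : ℂ) (z : ℕ) : Module.End ℂ (V z) where
  toFun := Eop q z
  map_add' v w := by
    ext s
    simp only [Eop, Pi.add_apply, ← sum_add_distrib]
    refine sum_congr rfl fun i _ => ?_
    split_ifs <;> ring
  map_smul' c v := by
    ext s
    simp only [Eop, Pi.smul_apply, smul_eq_mul, RingHom.id_apply, mul_sum]
    refine sum_congr rfl fun i _ => ?_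
    split_ifs <;> ring

lemma Eop_iterate_sum_smul (q : ℂ) (z n : ℕ) {ι : Type*} (T : Finset ι) (c : ι → ℂ)
    (v : ι → V z) :
    (Eop q z)^[n] (∑ i ∈ T, c i • v i) = ∑ i ∈ T, c i • (Eop q z)^[n] (v i) := by
  change (⇑(EopLinear q z))^[n] _ = ∑ i ∈ T, c i • (⇑(EopLinear q z))^[n] _
  simp only [← Module.End.coe_pow, map_sum, map_smul]

lemma Eop_bvec (q : ℂ) (z : ℕ) (t : Fin z → Fin 2) :
    Eop q z (bvec z t) = ∑ i with t i = 1,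
      (∏ j ∈ Ioi i, q ^ ((1 : ℤ) - 2 * ((t j : ℕ) : ℤ))) • bvec z (update t i 0) := by
  ext s
  simp only [Eop, bvec, Finset.sum_apply, Pi.smul_apply, smul_eq_mul, sum_filter, filter_lt_eq_Ioi]
  refine sum_congr rfl fun i _ => ?_
  by_cases h : t i = 1 ∧ s = update t i 0
  · obtain ⟨hti, rfl⟩ := h
    obtain ⟨hsi, hupd⟩ := update_eq_iff_eq_update.mpr ⟨hti, rfl⟩
    rw [if_pos hsi, if_pos hupd, if_pos hti, if_pos rfl]
    refine congrArg (· * 1) (prod_congr rfl fun j hj => ?_)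
    rw [update_of_ne (mem_Ioi.mp hj).ne']
  · have hlhs : ¬(s i = 0 ∧ update s i 1 = t) := fun h' => h (update_eq_iff_eq_update.mp h')
    rw [not_and_or] at h hlhs
    split_ifs <;> simp_all

lemma prod_Ioi_zpow_indicator {q : ℂ} (hq0 : q ≠ 0) {z : ℕ} (S : Finset (Fin z)) (i : Fin z) :
    ∏ j ∈ Ioi i, q ^ ((1 : ℤ) - 2 * (((if j ∈ S then 1 else 0 : Fin 2) : ℕ) : ℤ)) =
      q ^ ((z : ℤ) - 1 - i - 2 * #{j ∈ S | i < j}) := by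
  have hfactor : ∀ j, q ^ ((1 : ℤ) - 2 * (((if j ∈ S then 1 else 0 : Fin 2) : ℕ) : ℤ)) =
      if j ∈ S then q⁻¹ else q := by
    intro j
    split_ifs <;> norm_num
  have hin : #{j ∈ Ioi i | j ∈ S} = #{j ∈ S | i < j} := by
    congr 1
    ext j
    simp [and_comm]
  have hsplit : #{j ∈ Ioi i | j ∈ S} + #{j ∈ Ioi i | j ∉ S} = z - 1 - i := by
    rw [card_filter_add_card_filter_not, Fin.card_Ioi]
  have hexp : (z : ℤ) - 1 - i - 2 * #{j ∈ S | i < j} =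
      #{j ∈ Ioi i | j ∉ S} - #{j ∈ Ioi i | j ∈ S} := by
    have := i.isLt
    omega
  simp_rw [hfactor]
  rw [prod_ite, prod_const, prod_const, hexp, zpow_sub₀ hq0, zpow_natCast, zpow_natCast,
    inv_pow, div_eq_mul_inv, mul_comm]

lemma Eop_bvec_indicator {q : ℂ} (hq0 : q ≠ 0) {z : ℕ} (S : Finset (Fin z)) :
    Eop q z (bvec z fun j => if j ∈ S then 1 else 0) = ∑ i ∈ S,
      q ^ ((z : ℤ) - 1 - i - 2 * #{j ∈ S | i < j}) •
        bvec z (fun j => if j ∈ S.erase i then 1 else 0) := by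
  have hS : ({i | (if i ∈ S then 1 else 0 : Fin 2) = 1} : Finset (Fin z)) = S := by
    ext i
    by_cases hi : i ∈ S <;> simp [hi]
  rw [Eop_bvec, hS]
  refine sum_congr rfl fun i _ => ?_
  rw [prod_Ioi_zpow_indicator hq0]
  congr 2
  ext j
  by_cases hj : j = i
  · simp [hj]
  · simp [hj, update_of_ne]

lemma Eop_exponent_succ {q : ℂ} (hq0 : q ≠ 0) {z n : ℕ} {S : Finset (Fin z)} {i : Fin z}
    (hi : i ∈ S) :
    q ^ ((z : ℤ) - 1 - i - 2 * #{j ∈ S | i < j}) *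
        q ^ ((n : ℤ) * z - ((n : ℤ) ^ 2 - n) / 2 - ∑ a ∈ S.erase i, ((a : ℕ) + 1 : ℤ)) =
      q ^ ((↑(n + 1) : ℤ) * z - ((↑(n + 1) : ℤ) ^ 2 - ↑(n + 1)) / 2 -
          ∑ a ∈ S, ((a : ℕ) + 1 : ℤ)) *
        q ^ ((↑(n + 1) : ℤ) - 1 - 2 * #{j ∈ S | i < j}) := by
  have hdiv : ((↑(n + 1) : ℤ) ^ 2 - ↑(n + 1)) / 2 = ((n : ℤ) ^ 2 - n) / 2 + n := by
    rw [← Int.add_mul_ediv_right _ _ two_ne_zero]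
    push_cast
    ring_nf
  rw [← zpow_add₀ hq0, ← zpow_add₀ hq0, hdiv, sum_erase_eq_sub hi]
  push_cast
  ring_nf

lemma sum_Eop_coeff_succ {q : ℂ} (hq0 : q ≠ 0) (hq1 : q ^ 2 ≠ 1) {z n : ℕ} {S : Finset (Fin z)}
    (hS : #S = n + 1) :
    ∑ i ∈ S, q ^ ((z : ℤ) - 1 - i - 2 * #{j ∈ S | i < j}) *
        (q ^ ((n : ℤ) * z - ((n : ℤ) ^ 2 - n) / 2 - ∑ a ∈ S.erase i, ((a : ℕ) + 1 : ℤ)) *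
          qfact q n) =
      q ^ ((↑(n + 1) : ℤ) * z - ((↑(n + 1) : ℤ) ^ 2 - ↑(n + 1)) / 2 -
          ∑ a ∈ S, ((a : ℕ) + 1 : ℤ)) * qfact q (n + 1) := by
  calc _ = q ^ ((↑(n + 1) : ℤ) * z - ((↑(n + 1) : ℤ) ^ 2 - ↑(n + 1)) / 2 -
          ∑ a ∈ S, ((a : ℕ) + 1 : ℤ)) * qfact q n *
        ∑ i ∈ S, q ^ ((↑(n + 1) : ℤ) - 1 - 2 * #{j ∈ S | i < j}) := by
        rw [mul_sum]
        refine sum_congr rfl fun i hi => ?_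
        rw [← mul_assoc, Eop_exponent_succ hq0 hi]
        ring
    _ = _ := by
        rw [sum_card_filter_lt S (fun m => q ^ ((↑(n + 1) : ℤ) - 1 - 2 * m)), hS,
          ← qint_natCast_eq_sum hq0 hq1, qfact_succ, mul_assoc]

/-- The paper's positions `i_j` are 1-based, whence `a + 1` for `a : Fin z`. -/
theorem E_pow_basis (q : ℂ) (hq0 : q ≠ 0) (hq1 : q ^ 2 ≠ 1) (z n : ℕ)
    (S : Finset (Fin z)) (hS : S.card = n) :
    (Eop q z)^[n] (bvec z (fun j => if j ∈ S then 1 else 0)) =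
      (q ^ ((n : ℤ) * z - ((n : ℤ) ^ 2 - n) / 2 - ∑ a ∈ S, ((a : ℕ) + 1 : ℤ)) * qfact q n) •
        bvec z (fun _ => 0) := by
  induction n generalizing S with
  | zero =>
    obtain rfl := card_eq_zero.mp hS
    simp [qfact]
  | succ n ih =>
    rw [iterate_succ_apply, Eop_bvec_indicator hq0, Eop_iterate_sum_smul,
      ← sum_Eop_coeff_succ hq0 hq1 hS, sum_smul]
    refine sum_congr rfl fun i hi => ?_
    rw [ih (S.erase i) (by rw [card_erase_of_mem hi, hS, Nat.add_sub_cancel]), smul_smul]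
end

section
/- For the action of E and F on X^{⊗(z+1)} (via iterated coproduct), with x_{z,z} := ν_1^{⊗z} and x_{0,z} := ν_0^{⊗z}, one has: E^k(ν_1^{⊗(z+1)}) = [k]·(E^{k-1} ν_1^{⊗z})⊗ν_0 + q^{-k}·(E^k ν_1^{⊗z})⊗ν_1 and F^k(ν_0^{⊗(z+1)}) = (F^k ν_0^{⊗z})⊗ν_0 + q^{k-z-1}·[k]·(F^{k-1} ν_0^{⊗z})⊗ν_1. -/
/-- The tensor product `w ⊗ ν_b : X^{⊗z} ⊗ X → X^{⊗(z+1)}`. -/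
noncomputable def tensR (z : ℕ) (w : V z) (b : Fin 2) : V (z + 1) := fun s =>
  if s (Fin.last z) = b then w (fun i => s i.castSucc) else 0

section Aux

lemma qsub_ne (q : ℂ) (hq0 : q ≠ 0) (hq1 : q^2 ≠ 1) : q - q⁻¹ ≠ 0 := by
  intro h
  apply hq1
  rw [sq]
  nth_rewrite 2 [sub_eq_zero.mp h]
  exact mul_inv_cancel₀ hq0

lemma qint_one (q : ℂ) (hq0 : q ≠ 0) (hq1 : q^2 ≠ 1) : qint q 1 = 1 := by
  rw [qint, zpow_one, zpow_neg, zpow_one]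
  exact div_self (qsub_ne q hq0 hq1)

lemma qint_succ_left (q : ℂ) (hq0 : q ≠ 0) (hq1 : q^2 ≠ 1) (n : ℤ) :
    qint q (n+1) = q * qint q n + q ^ (-n) := by
  have hqq := qsub_ne q hq0 hq1
  rw [qint, qint, ← mul_div_assoc, div_add' _ _ _ hqq]
  congr 1
  rw [zpow_add_one₀ hq0, neg_add, zpow_add₀ hq0, zpow_neg q 1, zpow_one]
  ring

lemma qint_succ_right (q : ℂ) (hq0 : q ≠ 0) (hq1 : q^2 ≠ 1) (n : ℤ) :
    qint q (n+1) = q ^ n + q⁻¹ * qint q n := by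
  have hqq := qsub_ne q hq0 hq1
  rw [qint, qint, ← mul_div_assoc, add_div' _ _ _ hqq]
  congr 1
  rw [zpow_add_one₀ hq0, neg_add, zpow_add₀ hq0, zpow_neg q 1, zpow_one]
  ring

lemma prod_zpow_sum {q : ℂ} (hq0 : q ≠ 0) {α : Type*} (t : Finset α) (f : α → ℤ) :
    ∏ j ∈ t, q ^ f j = q ^ (∑ j ∈ t, f j) := by
  induction t using Finset.cons_induction with
  | empty => simp
  | cons a t ha ih => rw [Finset.prod_cons, Finset.sum_cons, ih, ← zpow_add₀ hq0]

noncomputable def Kinv (q : ℂ) (z : ℕ) (w : V z) : V z := fun s =>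
  (∏ j, q ^ (-((1 : ℤ) - 2 * ((s j : ℕ) : ℤ)))) * w s

lemma Eop_add (q : ℂ) (z : ℕ) (v w : V z) : Eop q z (v + w) = Eop q z v + Eop q z w := by
  funext s
  simp only [Eop, Pi.add_apply, ← Finset.sum_add_distrib]
  refine Finset.sum_congr rfl fun i _ => ?_
  split <;> ring

lemma Eop_smul (q c : ℂ) (z : ℕ) (v : V z) : Eop q z (c • v) = c • Eop q z v := by
  funext s
  simp only [Eop, Pi.smul_apply, smul_eq_mul, Finset.mul_sum]
  refine Finset.sum_congr rfl fun i _ => ?_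
  split <;> ring

lemma Fop_add (q : ℂ) (z : ℕ) (v w : V z) : Fop q z (v + w) = Fop q z v + Fop q z w := by
  funext s
  simp only [Fop, Pi.add_apply, ← Finset.sum_add_distrib]
  refine Finset.sum_congr rfl fun i _ => ?_
  split <;> ring

lemma Fop_smul (q c : ℂ) (z : ℕ) (v : V z) : Fop q z (c • v) = c • Fop q z v := by
  funext s
  simp only [Fop, Pi.smul_apply, smul_eq_mul, Finset.mul_sum]
  refine Finset.sum_congr rfl fun i _ => ?_
  split <;> ring

lemma tensR_smul (z : ℕ) (c : ℂ) (w : V z) (b : Fin 2) :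
    tensR z (c • w) b = c • tensR z w b := by
  funext s
  simp only [tensR, Pi.smul_apply, smul_eq_mul]
  split <;> simp

lemma update_comp_castSucc (z : ℕ) (s : Fin (z+1) → Fin 2) (i : Fin z) (a : Fin 2) :
    (fun j : Fin z => Function.update s i.castSucc a j.castSucc) =
      Function.update (fun j : Fin z => s j.castSucc) i a := by
  funext j
  simp [Function.update_apply, Fin.castSucc_inj]

lemma update_last (z : ℕ) (s : Fin (z+1) → Fin 2) (i : Fin z) (a : Fin 2) :
    Function.update s i.castSucc a (Fin.last z) = s (Fin.last z) :=
  Function.update_of_ne (Fin.castSucc_lt_last i).ne' _ _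

lemma bvec_const (z : ℕ) (c : Fin 2) :
    bvec (z+1) (fun _ => c) = tensR z (bvec z (fun _ => c)) c := by
  funext s
  simp only [bvec, tensR]
  by_cases h : s = fun _ => c
  · subst h; simp
  · rw [if_neg h]
    by_cases hl : s (Fin.last z) = c
    · rw [if_pos hl, if_neg]
      intro hc
      apply h
      funext j
      rcases Fin.eq_castSucc_or_eq_last j with ⟨j', rfl⟩ | rfl
      · exact congrFun hc j'
      · exact hl
    · rw [if_neg hl]

lemma filter_gt_prod {z : ℕ} (f : Fin (z+1) → ℂ) (i : Fin z) :
    ∏ j ∈ Finset.univ.filter (fun j => i.castSucc < j), f j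
      = (∏ j ∈ Finset.univ.filter (fun j : Fin z => i < j), f j.castSucc) * f (Fin.last z) := by
  rw [Finset.prod_filter, Finset.prod_filter, Fin.prod_univ_castSucc]
  simp [Fin.castSucc_lt_castSucc_iff, Fin.castSucc_lt_last]

lemma filter_lt_prod {z : ℕ} (f : Fin (z+1) → ℂ) (i : Fin z) :
    ∏ j ∈ Finset.univ.filter (fun j => j < i.castSucc), f j
      = ∏ j ∈ Finset.univ.filter (fun j : Fin z => j < i), f j.castSucc := by
  have h : ¬ Fin.last z < i.castSucc := (Fin.castSucc_lt_last i).asymm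
  rw [Finset.prod_filter, Finset.prod_filter, Fin.prod_univ_castSucc]
  simp [Fin.castSucc_lt_castSucc_iff, h]

lemma filter_lt_last_prod {z : ℕ} (f : Fin (z+1) → ℂ) :
    ∏ j ∈ Finset.univ.filter (fun j => j < Fin.last z), f j = ∏ j : Fin z, f j.castSucc := by
  rw [Finset.prod_filter, Fin.prod_univ_castSucc]
  simp [Fin.castSucc_lt_last]

lemma filter_gt_last {z : ℕ} :
    Finset.univ.filter (fun j : Fin (z+1) => Fin.last z < j) = ∅ := by
  rw [Finset.filter_eq_empty_iff]
  exact fun j _ => (Fin.le_last j).not_gt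

lemma Eop_tensR_one (q : ℂ) (z : ℕ) (w : V z) :
    Eop q (z+1) (tensR z w 1) = tensR z w 0 + q⁻¹ • tensR z (Eop q z w) 1 := by
  funext s
  simp only [Eop, Pi.add_apply, Pi.smul_apply, smul_eq_mul]
  rw [Fin.sum_univ_castSucc, add_comm (tensR z w 0 s) (q⁻¹ * tensR z (Eop q z w) 1 s)]
  congr 1
  · simp only [filter_gt_prod, tensR, update_last, update_comp_castSucc]
    by_cases hl : s (Fin.last z) = 1
    · have hq1 : q ^ ((1:ℤ) - 2 * (((1 : Fin 2) : ℕ) : ℤ)) = q⁻¹ := by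
        norm_num
      simp only [hl, reduceIte, hq1]
      rw [Eop, Finset.mul_sum]
      refine Finset.sum_congr rfl fun i _ => ?_
      by_cases hi : s i.castSucc = 0 <;> [skip; skip] <;> simp [hi] <;> ring
    · simp [hl]
  · rw [filter_gt_last, Finset.prod_empty, one_mul]
    simp only [tensR, Function.update_self, reduceIte]
    have he : (fun i : Fin z => Function.update s (Fin.last z) 1 i.castSucc)
        = fun i => s i.castSucc := by
      funext i
      exact Function.update_of_ne (Fin.castSucc_lt_last i).ne _ _
    rw [he]

lemma Eop_tensR_zero (q : ℂ) (z : ℕ) (w : V z) :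
    Eop q (z+1) (tensR z w 0) = q • tensR z (Eop q z w) 0 := by
  funext s
  simp only [Eop, Pi.smul_apply, smul_eq_mul]
  rw [Fin.sum_univ_castSucc]
  have hlast : (if s (Fin.last z) = 0 then
      (∏ j ∈ Finset.univ.filter (fun j => Fin.last z < j), q ^ ((1 : ℤ) - 2 * ((s j : ℕ) : ℤ))) *
        tensR z w 0 (Function.update s (Fin.last z) 1) else 0) = 0 := by
    have : tensR z w 0 (Function.update s (Fin.last z) 1) = 0 := by
      simp [tensR]
    simp [this]
  rw [hlast, add_zero]
  simp only [filter_gt_prod, tensR, update_last, update_comp_castSucc]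
  by_cases hl : s (Fin.last z) = 0
  · have hq1 : q ^ ((1:ℤ) - 2 * (((0 : Fin 2) : ℕ) : ℤ)) = q := by
      norm_num
    simp only [hl, reduceIte, hq1]
    rw [Eop, Finset.mul_sum]
    refine Finset.sum_congr rfl fun i _ => ?_
    by_cases hi : s i.castSucc = 0 <;> [skip; skip] <;> simp [hi] <;> ring
  · simp [hl]

lemma Fop_tensR_one (q : ℂ) (z : ℕ) (w : V z) :
    Fop q (z+1) (tensR z w 1) = tensR z (Fop q z w) 1 := by
  funext s
  simp only [Fop]
  rw [Fin.sum_univ_castSucc]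
  have hlast : (if s (Fin.last z) = 1 then
      (∏ j ∈ Finset.univ.filter (fun j => j < Fin.last z), q ^ (-((1 : ℤ) - 2 * ((s j : ℕ) : ℤ)))) *
        tensR z w 1 (Function.update s (Fin.last z) 0) else 0) = 0 := by
    have : tensR z w 1 (Function.update s (Fin.last z) 0) = 0 := by
      simp [tensR]
    simp [this]
  rw [hlast, add_zero]
  simp only [filter_lt_prod, tensR, update_last, update_comp_castSucc]
  by_cases hl : s (Fin.last z) = 1
  · simp only [hl, reduceIte]
    rw [Fop]
  · simp [hl]

lemma Fop_tensR_zero (q : ℂ) (z : ℕ) (w : V z) :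
    Fop q (z+1) (tensR z w 0) = tensR z (Fop q z w) 0 + tensR z (Kinv q z w) 1 := by
  funext s
  simp only [Fop, Pi.add_apply]
  rw [Fin.sum_univ_castSucc]
  congr 1
  · simp only [filter_lt_prod, tensR, update_last, update_comp_castSucc]
    by_cases hl : s (Fin.last z) = 0
    · simp only [hl, reduceIte]
      rw [Fop]
    · simp [hl]
  · simp only [tensR, Kinv]
    by_cases hl : s (Fin.last z) = 1
    · have he : (fun i : Fin z => Function.update s (Fin.last z) 0 i.castSucc)
          = fun i => s i.castSucc := by
        funext i
        exact Function.update_of_ne (Fin.castSucc_lt_last i).ne _ _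
      simp only [hl, Function.update_self, reduceIte, he, filter_lt_last_prod]
    · simp [hl]

lemma Fop_iter_supp (q : ℂ) (z m : ℕ) :
    ∀ s, (Fop q z)^[m] (bvec z (fun _ => 0)) s ≠ 0 → ∑ j, ((s j : ℕ)) = m := by
  induction m with
  | zero =>
    intro s hs
    simp only [Function.iterate_zero, id_eq, bvec] at hs
    by_cases h : s = fun _ => 0
    · subst h; simp
    · rw [if_neg h] at hs
      exact absurd rfl hs
  | succ m ih =>
    intro s hs
    rw [Function.iterate_succ_apply', Fop] at hs
    obtain ⟨i, -, hi⟩ := Finset.exists_ne_zero_of_sum_ne_zero hs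
    by_cases h1 : s i = 1
    · rw [if_pos h1] at hi
      have hv : (Fop q z)^[m] (bvec z (fun _ => 0)) (Function.update s i 0) ≠ 0 :=
        fun h => hi (by rw [h, mul_zero])
      have hm := ih _ hv
      have h2 : ∑ j, ((Function.update s i 0 j : ℕ)) =
          ∑ j ∈ Finset.univ.erase i, ((s j : ℕ)) := by
        rw [← Finset.add_sum_erase _ _ (Finset.mem_univ i), Function.update_self]
        rw [Fin.val_zero, zero_add]
        exact Finset.sum_congr rfl fun j hj => by
          rw [Function.update_of_ne (Finset.ne_of_mem_erase hj)]
      have h3 : ∑ j, ((s j : ℕ)) = 1 + ∑ j ∈ Finset.univ.erase i, ((s j : ℕ)) := by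
        rw [← Finset.add_sum_erase _ _ (Finset.mem_univ i), h1]
        rfl
      omega
    · rw [if_neg h1] at hi
      exact absurd rfl hi

lemma Kinv_Fiter (q : ℂ) (hq0 : q ≠ 0) (z m : ℕ) :
    Kinv q z ((Fop q z)^[m] (bvec z (fun _ => 0))) =
      q ^ (2*(m:ℤ) - z) • (Fop q z)^[m] (bvec z (fun _ => 0)) := by
  funext s
  simp only [Kinv, Pi.smul_apply, smul_eq_mul]
  by_cases hv : (Fop q z)^[m] (bvec z (fun _ => 0)) s = 0
  · rw [hv, mul_zero, mul_zero]
  · congr 1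
    have hsum := Fop_iter_supp q z m s hv
    rw [prod_zpow_sum hq0]
    congr 1
    have h : ∑ j, (-((1:ℤ) - 2 * ((s j : ℕ) : ℤ))) =
        2 * ((∑ j, ((s j : ℕ)) : ℕ) : ℤ) - z := by
      simp only [neg_sub, Finset.sum_sub_distrib, Finset.sum_const, Finset.card_univ,
        Fintype.card_fin, nsmul_eq_mul, mul_one, ← Finset.mul_sum]
      push_cast
      ring
    rw [h, hsum]

end Aux

/-- `E^k(ν₁^{⊗(z+1)}) = [k]·(E^{k-1} ν₁^{⊗z})⊗ν₀ + q^{-k}·(E^k ν₁^{⊗z})⊗ν₁` and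
`F^k(ν₀^{⊗(z+1)}) = (F^k ν₀^{⊗z})⊗ν₀ + q^{k-z-1}·[k]·(F^{k-1} ν₀^{⊗z})⊗ν₁`. -/
theorem E_F_pow_tensor_split (q : ℂ) (hq0 : q ≠ 0) (hq1 : q ^ 2 ≠ 1)
    (z k : ℕ) (hk : 1 ≤ k) :
    (Eop q (z + 1))^[k] (bvec (z + 1) (fun _ => 1)) =
        qint q k • tensR z ((Eop q z)^[k - 1] (bvec z (fun _ => 1))) 0 +
        q ^ (-(k : ℤ)) • tensR z ((Eop q z)^[k] (bvec z (fun _ => 1))) 1 ∧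
    (Fop q (z + 1))^[k] (bvec (z + 1) (fun _ => 0)) =
        tensR z ((Fop q z)^[k] (bvec z (fun _ => 0))) 0 +
        (q ^ ((k : ℤ) - z - 1) * qint q k) • tensR z ((Fop q z)^[k - 1] (bvec z (fun _ => 0))) 1 := by
  have hqq := qsub_ne q hq0 hq1
  constructor
  · induction k, hk using Nat.le_induction with
    | base =>
      rw [Function.iterate_one, bvec_const, Eop_tensR_one]
      simp [qint_one q hq0 hq1, zpow_neg, zpow_one]
    | succ k hk ih =>
      have hk1 : k - 1 + 1 = k := Nat.succ_pred_eq_of_pos hk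
      have e1 : Eop q z ((Eop q z)^[k-1] (bvec z fun _ => 1)) =
          (Eop q z)^[k] (bvec z fun _ => 1) := by
        conv_rhs => rw [← hk1]
        exact (Function.iterate_succ_apply' _ _ _).symm
      have e2 : Eop q z ((Eop q z)^[k] (bvec z fun _ => 1)) =
          (Eop q z)^[k+1] (bvec z fun _ => 1) :=
        (Function.iterate_succ_apply' _ _ _).symm
      rw [Function.iterate_succ_apply', ih, Eop_add, Eop_smul, Eop_smul,
        Eop_tensR_zero, Eop_tensR_one, e1, e2, Nat.add_sub_cancel]
      have hs1 : qint q ((k + 1 : ℕ) : ℤ) = qint q k * q + q ^ (-(k:ℤ)) := by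
        push_cast
        rw [qint_succ_left q hq0 hq1]
        ring
      have hs2 : (q : ℂ) ^ (-((k + 1 : ℕ) : ℤ)) = q ^ (-(k:ℤ)) * q⁻¹ := by
        push_cast
        rw [neg_add, zpow_add₀ hq0]
        norm_num
      rw [hs1, hs2]
      module
  · induction k, hk using Nat.le_induction with
    | base =>
      rw [Function.iterate_one, bvec_const, Fop_tensR_zero,
        show (bvec z fun _ => 0) = (Fop q z)^[0] (bvec z fun _ => 0) from rfl,
        Kinv_Fiter q hq0 z 0, tensR_smul]
      simp [qint_one q hq0 hq1]
    | succ k hk ih =>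
      have hk1 : k - 1 + 1 = k := Nat.succ_pred_eq_of_pos hk
      have e1 : Fop q z ((Fop q z)^[k-1] (bvec z fun _ => 0)) =
          (Fop q z)^[k] (bvec z fun _ => 0) := by
        conv_rhs => rw [← hk1]
        exact (Function.iterate_succ_apply' _ _ _).symm
      have e2 : Fop q z ((Fop q z)^[k] (bvec z fun _ => 0)) =
          (Fop q z)^[k+1] (bvec z fun _ => 0) :=
        (Function.iterate_succ_apply' _ _ _).symm
      rw [Function.iterate_succ_apply', ih, Fop_add, Fop_smul,
        Fop_tensR_zero, Fop_tensR_one, e1, Kinv_Fiter q hq0 z k, tensR_smul,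
        e2, Nat.add_sub_cancel]
      have key : q ^ (2*(k:ℤ) - z) + q ^ ((k:ℤ) - z - 1) * qint q k
          = q ^ (((k + 1 : ℕ) : ℤ) - z - 1) * qint q ((k + 1 : ℕ) : ℤ) := by
        push_cast
        rw [qint_succ_right q hq0 hq1, show ((k:ℤ)+1) - z - 1 = (k:ℤ) - z from by ring,
          mul_add]
        congr 1
        · rw [← zpow_add₀ hq0]
          ring_nf
        · rw [← mul_assoc]
          congr 1
          rw [← zpow_neg_one, ← zpow_add₀ hq0]
          ring_nf
      rw [add_assoc, ← add_smul, key]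
end
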